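/- With σ, μ, c > 0 and ζ₁ > 0 > ζ₂ the roots of (σ²/2)ζ² + μζ - c = 0, C₀ > 0 (where C₀ = 1/(ζ₁e^{ζ₁b₀} - ζ₂e^{ζ₂b₀}) and b₀ the unique zero of ζ₁²e^{ζ₁x} - ζ₂²e^{ζ₂x}), the function f(x) = C₀(e^{ζ₁x} - e^{ζ₂x}) is strictly increasing and strictly concave on [0, b₀], and f'(x) ≥ 1 for all x ∈ [0, b₀]. -/

import Mathlib

/-!
With `g x = ζ₁² e^{ζ₁x} - ζ₂² e^{ζ₂x}` we have `f' = C₀ (ζ₁ e^{ζ₁x} - ζ₂ e^{ζ₂x}) > 0`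
and `f'' = C₀ g`. Since `ζ₁ > 0 > ζ₂`, also `g' = ζ₁³ e^{ζ₁x} - ζ₂³ e^{ζ₂x} > 0`, so `g` is
strictly increasing and, vanishing at `b₀`, negative to the left of it. Hence `f'` is strictly
decreasing on `(-∞, b₀]`, which gives strict concavity there, and `f' ≥ f'(b₀) = 1`, the
normalisation that defines `C₀`.
-/

open Real Set

/-- The `n`-th derivative of `x ↦ exp (a * x) - exp (b * x)`. -/
noncomputable def expSubDeriv (a b : ℝ) (n : ℕ) (x : ℝ) : ℝ :=
  a ^ n * exp (a * x) - b ^ n * exp (b * x)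

namespace expSubDeriv

variable {a b : ℝ} {n : ℕ}

theorem hasDerivAt (a b : ℝ) (n : ℕ) (x : ℝ) :
    HasDerivAt (expSubDeriv a b n) (expSubDeriv a b (n + 1) x) x := by
  have hexp (c : ℝ) : HasDerivAt (fun y => exp (c * y)) (exp (c * x) * c) x :=
    ((hasDerivAt_id x).const_mul c).exp.congr_deriv (by simp)
  have hsub :
      expSubDeriv a b (n + 1) x = a ^ n * (exp (a * x) * a) - b ^ n * (exp (b * x) * b) := by
    simp only [expSubDeriv]
    ring
  exact hsub ▸ ((hexp a).const_mul (a ^ n)).sub ((hexp b).const_mul (b ^ n))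

theorem deriv_eq (a b : ℝ) (n : ℕ) : deriv (expSubDeriv a b n) = expSubDeriv a b (n + 1) :=
  funext fun x => (hasDerivAt a b n x).deriv

theorem continuous (a b : ℝ) (n : ℕ) : Continuous (expSubDeriv a b n) :=
  continuous_iff_continuousAt.mpr fun x => (hasDerivAt a b n x).continuousAt

theorem pos_of_odd (ha : 0 < a) (hb : b < 0) (hn : Odd n) (x : ℝ) : 0 < expSubDeriv a b n x :=
  sub_pos.mpr <| (mul_neg_of_neg_of_pos (hn.pow_neg hb) (exp_pos _)).trans
    (mul_pos (pow_pos ha n) (exp_pos _))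

theorem strictMono_of_even (ha : 0 < a) (hb : b < 0) (hn : Even n) :
    StrictMono (expSubDeriv a b n) :=
  strictMono_of_deriv_pos fun x => by
    rw [deriv_eq]
    exact pos_of_odd ha hb hn.add_one x

theorem strictAntiOn_one {b₀ : ℝ} (ha : 0 < a) (hb : b < 0)
    (hb₀ : expSubDeriv a b 2 b₀ = 0) :
    StrictAntiOn (expSubDeriv a b 1) (Iic b₀) := by
  refine strictAntiOn_of_deriv_neg (convex_Iic b₀) (continuous a b 1).continuousOn fun x hx => ?_
  rw [interior_Iic] at hx
  rw [deriv_eq, ← hb₀]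
  exact strictMono_of_even ha hb even_two hx

end expSubDeriv

theorem statement3_general (ζ₁ ζ₂ b₀ : ℝ)
    (hζ₁ : 0 < ζ₁) (hζ₂ : ζ₂ < 0)
    (hb₀ : ζ₁^2 * Real.exp (ζ₁ * b₀) = ζ₂^2 * Real.exp (ζ₂ * b₀)) :
    let C₀ := 1 / (ζ₁ * Real.exp (ζ₁ * b₀) - ζ₂ * Real.exp (ζ₂ * b₀))
    let f : ℝ → ℝ := fun x => C₀ * (Real.exp (ζ₁ * x) - Real.exp (ζ₂ * x))
    StrictMonoOn f (Set.Icc 0 b₀) ∧ StrictConcaveOn ℝ (Set.Icc 0 b₀) f ∧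
      ∀ x ∈ Set.Icc 0 b₀, 1 ≤ deriv f x := by
  intro C₀ f
  have hC₀ : C₀ = 1 / expSubDeriv ζ₁ ζ₂ 1 b₀ := by simp [C₀, expSubDeriv]
  have hC₀_pos : 0 < C₀ :=
    hC₀ ▸ one_div_pos.mpr (expSubDeriv.pos_of_odd hζ₁ hζ₂ odd_one b₀)
  have hf : f = fun x => C₀ * expSubDeriv ζ₁ ζ₂ 0 x := by funext x; simp [f, expSubDeriv]
  have hf' : deriv f = fun x => C₀ * expSubDeriv ζ₁ ζ₂ 1 x :=
    funext fun x => (hf ▸ (expSubDeriv.hasDerivAt ζ₁ ζ₂ 0 x).const_mul C₀).deriv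
  have hf'_anti : StrictAntiOn (deriv f) (Iic b₀) := by
    have hb₀' : expSubDeriv ζ₁ ζ₂ 2 b₀ = 0 := sub_eq_zero.mpr hb₀
    rw [hf']
    exact fun x hx y hy hxy =>
      mul_lt_mul_of_pos_left (expSubDeriv.strictAntiOn_one hζ₁ hζ₂ hb₀' hx hy hxy) hC₀_pos
  refine ⟨?_, ?_, fun x hx => ?_⟩
  · refine (strictMono_of_deriv_pos fun x => ?_).strictMonoOn _
    rw [hf']
    exact mul_pos hC₀_pos (expSubDeriv.pos_of_odd hζ₁ hζ₂ odd_one x)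
  · have hf_cont : Continuous f :=
      hf ▸ continuous_const.mul (expSubDeriv.continuous ζ₁ ζ₂ 0)
    exact ((hf'_anti.mono interior_subset).strictConcaveOn_of_deriv (convex_Iic b₀)
      hf_cont.continuousOn).subset Icc_subset_Iic_self (convex_Icc 0 b₀)
  · have hf'_b₀ : deriv f b₀ = 1 := by
      rw [hf', hC₀]
      exact one_div_mul_cancel (expSubDeriv.pos_of_odd hζ₁ hζ₂ odd_one b₀).ne'
    exact hf'_b₀ ▸ hf'_anti.antitoneOn hx.2 self_mem_Iic hx.2

/-- With ζ₁ > 0 > ζ₂ the roots of (σ²/2)ζ² + μζ - c = 0, b₀ the unique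
zero of ζ₁²e^{ζ₁x} - ζ₂²e^{ζ₂x} and C₀ = 1/(ζ₁e^{ζ₁b₀} - ζ₂e^{ζ₂b₀}), the function
f(x) = C₀(e^{ζ₁x} - e^{ζ₂x}) is strictly increasing and strictly concave on [0,b₀],
with f'(x) ≥ 1 on [0,b₀]. -/
theorem statement3 (σ μ c ζ₁ ζ₂ b₀ : ℝ) (hσ : 0 < σ) (hμ : 0 < μ) (hc : 0 < c)
    (hζ₁ : 0 < ζ₁) (hζ₂ : ζ₂ < 0)
    (hr₁ : σ^2/2 * ζ₁^2 + μ * ζ₁ - c = 0)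
    (hr₂ : σ^2/2 * ζ₂^2 + μ * ζ₂ - c = 0)
    (hb₀ : ζ₁^2 * Real.exp (ζ₁ * b₀) = ζ₂^2 * Real.exp (ζ₂ * b₀))
    (hb₀u : ∀ x : ℝ, ζ₁^2 * Real.exp (ζ₁ * x) = ζ₂^2 * Real.exp (ζ₂ * x) → x = b₀) :
    let C₀ := 1 / (ζ₁ * Real.exp (ζ₁ * b₀) - ζ₂ * Real.exp (ζ₂ * b₀))
    let f : ℝ → ℝ := fun x => C₀ * (Real.exp (ζ₁ * x) - Real.exp (ζ₂ * x))
    StrictMonoOn f (Set.Icc 0 b₀) ∧ StrictConcaveOn ℝ (Set.Icc 0 b₀) f ∧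
      ∀ x ∈ Set.Icc 0 b₀, 1 ≤ deriv f x :=
  statement3_general ζ₁ ζ₂ b₀ hζ₁ hζ₂ hb₀
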